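/- arXiv:1201.1423 — 6 statements merged into one kernel-verified Lean document; each statement's English description precedes it below -/
import Mathlib

section
/- Let v be the one-sided gTM fixed point and suppose the limits η(m) = lim_{N→∞} (1/N) ∑_{n=0}^{N-1} v_n v_{n+m} exist for all m ≥ 0. Then η((k+ℓ)m) = η(m) for all m ≥ 0. -/
/-!
Cut the sum `∑_{n < (k+ℓ)N} v n v (n + (k+ℓ)m)` into `N` blocks of length `k+ℓ`. The indices
`(k+ℓ)q + r` and `(k+ℓ)(q+m) + r` of a term in block `q` end in the same digit `r`, so the
substitution gives both factors the same sign relative to `v q` and `v (q+m)`, and every term of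
the block equals `v q v (q+m)`. Hence the Cesàro mean of length `(k+ℓ)N` at lag `(k+ℓ)m` equals
the Cesàro mean of length `N` at lag `m`, and letting `N → ∞` gives `η((k+ℓ)m) = η(m)`.
-/

open Filter Finset

theorem Finset.sum_range_mul_eq_sum_sum {M : Type*} [AddCommMonoid M] (f : ℕ → M) (K N : ℕ) :
    ∑ n ∈ range (K * N), f n = ∑ q ∈ range N, ∑ r ∈ range K, f (K * q + r) := by
  induction N with
  | zero => simp
  | succ N ih => rw [Nat.mul_succ, sum_range_add, ih, sum_range_succ]

noncomputable def cesaroMean (u : ℕ → ℝ) (N : ℕ) : ℝ :=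
  (1 / (N : ℝ)) * ∑ n ∈ range N, u n

theorem cesaroMean_mul_eq_of_block_eq {u w : ℕ → ℝ} {K : ℕ} (hK : 0 < K)
    (hblock : ∀ q r, r < K → u (K * q + r) = w q) (N : ℕ) :
    cesaroMean u (K * N) = cesaroMean w N := by
  have hsum : ∑ n ∈ range (K * N), u n = K * ∑ q ∈ range N, w q := by
    rw [sum_range_mul_eq_sum_sum, mul_sum]
    refine sum_congr rfl fun q _ => ?_
    rw [sum_congr rfl fun r hr => hblock q r (mem_range.mp hr), sum_const, card_range,
      nsmul_eq_mul]
  have hK' : (K : ℝ) ≠ 0 := Nat.cast_ne_zero.mpr hK.ne'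
  rw [cesaroMean, cesaroMean, hsum, Nat.cast_mul, one_div_mul_eq_div, one_div_mul_eq_div,
    mul_div_mul_left _ _ hK']

theorem mul_eq_of_digit_eq {R : Type*} [CommRing R] {k ℓ : ℕ} {v : ℕ → R}
    (hfix1 : ∀ m r, r < k → v ((k + ℓ) * m + r) = v m)
    (hfix2 : ∀ m r, k ≤ r → r < k + ℓ → v ((k + ℓ) * m + r) = -(v m))
    {r : ℕ} (hr : r < k + ℓ) (p q : ℕ) :
    v ((k + ℓ) * p + r) * v ((k + ℓ) * q + r) = v p * v q := by
  rcases lt_or_ge r k with hrk | hrk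
  · rw [hfix1 p r hrk, hfix1 q r hrk]
  · rw [hfix2 p r hrk hr, hfix2 q r hrk hr, neg_mul_neg]

theorem gtm_autocorrelation_self_similar_general (k ℓ : ℕ) (hk : 1 ≤ k)
    (v : ℕ → ℤ)
    (hfix1 : ∀ m r, r < k → v ((k + ℓ) * m + r) = v m)
    (hfix2 : ∀ m r, k ≤ r → r < k + ℓ → v ((k + ℓ) * m + r) = -(v m))
    (η : ℕ → ℝ)
    (hη : ∀ m, Tendsto
      (fun N : ℕ => (1 / (N : ℝ)) * ∑ n ∈ Finset.range N, (v n : ℝ) * (v (n + m) : ℝ))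
      atTop (nhds (η m))) :
    ∀ m, η ((k + ℓ) * m) = η m := by
  intro m
  have hK : 0 < k + ℓ := by omega
  have hblock : ∀ q r, r < k + ℓ →
      (v ((k + ℓ) * q + r) : ℝ) * v ((k + ℓ) * q + r + (k + ℓ) * m) = v q * v (q + m) := by
    intro q r hr
    rw [show (k + ℓ) * q + r + (k + ℓ) * m = (k + ℓ) * (q + m) + r by ring]
    exact_mod_cast mul_eq_of_digit_eq hfix1 hfix2 hr q (q + m)
  have hsub : Tendsto (fun N => cesaroMean (fun n => v n * v (n + (k + ℓ) * m)) ((k + ℓ) * N))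
      atTop (nhds (η ((k + ℓ) * m))) :=
    (hη ((k + ℓ) * m)).comp (tendsto_id.const_mul_atTop' hK)
  rw [funext (cesaroMean_mul_eq_of_block_eq (w := fun q => v q * v (q + m)) hK hblock)] at hsub
  exact tendsto_nhds_unique hsub (hη m)

/-- if `v` is the one-sided gTM fixed point (values `±1`,
`v 0 = 1`, with the self-similarity `v ((k+ℓ)m+r) = ±(v m)`) and the
autocorrelation limits `η m = lim_N (1/N) ∑_{n<N} v n * v (n+m)` exist,
then `η ((k+ℓ) m) = η m` for all `m : ℕ`. -/
theorem gtm_autocorrelation_self_similar (k ℓ : ℕ) (hk : 1 ≤ k) (hℓ : 1 ≤ ℓ)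
    (v : ℕ → ℤ) (hpm : ∀ n, v n = 1 ∨ v n = -1) (hv0 : v 0 = 1)
    (hfix1 : ∀ m r, r < k → v ((k + ℓ) * m + r) = v m)
    (hfix2 : ∀ m r, k ≤ r → r < k + ℓ → v ((k + ℓ) * m + r) = -(v m))
    (η : ℕ → ℝ)
    (hη : ∀ m, Tendsto
      (fun N : ℕ => (1 / (N : ℝ)) * ∑ n ∈ Finset.range N, (v n : ℝ) * (v (n + m) : ℝ))
      atTop (nhds (η m))) :
    ∀ m, η ((k + ℓ) * m) = η m :=
  gtm_autocorrelation_self_similar_general k ℓ hk v hfix1 hfix2 η hη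
end

section
/- The autocorrelation coefficients of the gTM sequence satisfy the linear recursion η((k+ℓ)m + r) = (1/(k+ℓ)) (α_{k,ℓ,r} η(m) + α_{k,ℓ,k+ℓ−r} η(m+1)) for all m ∈ ℤ and 0 ≤ r < k+ℓ, where α_{k,ℓ,r} = k+ℓ−r−2·min(k,ℓ,r,k+ℓ−r). -/
/-!
On the block `[K q, K q + K)`, `K = k + ℓ`, the two-sided sequence equals `w q` times the word
`1^k (-1)^ℓ` when `q ≥ 0`, and `w q` times the reversed word when `q < 0`. Hence the correlation
at shift `K m + r`, summed over one block `q`, is `α_r w(q) w(q-m) + α_{K-r} w(q) w(q-m-1)`, where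
`α` is the aperiodic autocorrelation of the word (reversal does not change it). This fails only
for the finitely many blocks near `0` where the two sides meet, so summing over `[-K P, K P)`,
dividing by `2 K P` and letting `P → ∞` gives the recursion.
-/

open Filter

/-- `α_{k,ℓ,r} = k + ℓ - r - 2 min(k, ℓ, r, k+ℓ-r)`. -/
def gtmAlpha (k ℓ r : ℤ) : ℤ :=
  k + ℓ - r - 2 * min (min k ℓ) (min r (k + ℓ - r))

open Finset Topology

noncomputable def aperiodicCorr (p : ℤ → ℤ) (K r : ℤ) : ℤ :=
  ∑ s ∈ Ico r K, p s * p (s - r)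

lemma aperiodicCorr_reverse (p : ℤ → ℤ) (K r : ℤ) :
    aperiodicCorr (fun s => p (K - 1 - s)) K r = aperiodicCorr p K r := by
  refine sum_nbij' (fun s => K - 1 + r - s) (fun s => K - 1 + r - s) ?_ ?_ ?_ ?_ ?_ <;>
    intro s hs <;> simp only [mem_Ico] at hs ⊢
  · omega
  · omega
  · ring
  · ring
  · rw [mul_comm]; ring_nf

lemma sum_Ico_mul_shift_eq_aperiodicCorr (p : ℤ → ℤ) (K r : ℤ) :
    ∑ s ∈ Ico 0 r, p s * p (s + (K - r)) = aperiodicCorr p K (K - r) := by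
  have := sum_Ico_add' (fun s => p (s - (K - r)) * p s) 0 r (K - r)
  simp only [zero_add, add_sub_cancel, add_sub_cancel_right] at this
  rw [aperiodicCorr, this]
  exact sum_congr rfl fun s _ => mul_comm _ _

/-- The word `1^k (-1)^ℓ` of the substitution, read on `0 ≤ s < k + ℓ`. -/
def gtmBlock (k : ℕ) (s : ℤ) : ℤ := if s < k then 1 else -1

lemma sum_ite_neg_one_one_eq_card_sub (t : Finset ℤ) (P : ℤ → Prop) [DecidablePred P] :
    ∑ s ∈ t, (if P s then -1 else 1 : ℤ) = #t - 2 * #{s ∈ t | P s} := by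
  rw [sum_ite, sum_const, sum_const, ← card_filter_add_card_filter_not P (s := t)]
  push_cast
  ring

lemma aperiodicCorr_gtmBlock (k ℓ : ℕ) {r : ℤ} (hr0 : 0 ≤ r) (hrK : r ≤ k + ℓ) :
    aperiodicCorr (gtmBlock k) ((k : ℤ) + ℓ) r = gtmAlpha k ℓ r := by
  have hsign : ∀ s ∈ Ico r ((k : ℤ) + ℓ), gtmBlock k s * gtmBlock k (s - r) =
      if (k : ℤ) ≤ s ∧ s < k + r then -1 else 1 := by
    intro s hs
    simp only [mem_Ico] at hs
    unfold gtmBlock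
    split_ifs <;> omega
  have hfilter : {s ∈ Ico r ((k : ℤ) + ℓ) | (k : ℤ) ≤ s ∧ s < k + r} =
      Ico (max r k) (min ((k : ℤ) + ℓ) (k + r)) := by
    ext s; simp only [mem_filter, mem_Ico, max_le_iff, lt_min_iff]; omega
  rw [aperiodicCorr, sum_congr rfl hsign, sum_ite_neg_one_one_eq_card_sub, hfilter, Int.card_Ico,
    Int.card_Ico, gtmAlpha]
  omega

def BlockPattern (w : ℤ → ℤ) (K : ℤ) (p : ℤ → ℤ) (j : ℤ) : Prop :=
  ∀ s ∈ Ico 0 K, w (K * j + s) = p s * w j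

lemma sum_block_mul_shift_eq {w p : ℤ → ℤ} {K r q m : ℤ} (hr0 : 0 ≤ r) (hrK : r ≤ K)
    (hq : BlockPattern w K p q) (hqm : BlockPattern w K p (q - m))
    (hqm1 : BlockPattern w K p (q - (m + 1))) :
    ∑ s ∈ Ico 0 K, w (K * q + s) * w (K * q + s - (K * m + r)) =
      aperiodicCorr p K r * (w q * w (q - m)) +
        aperiodicCorr p K (K - r) * (w q * w (q - (m + 1))) := by
  have hlow : ∀ s ∈ Ico 0 r, w (K * q + s) * w (K * q + s - (K * m + r)) =
      p s * p (s + (K - r)) * (w q * w (q - (m + 1))) := by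
    intro s hs
    have hs' := mem_Ico.mp hs
    rw [show K * q + s - (K * m + r) = K * (q - (m + 1)) + (s + (K - r)) by ring,
      hq s (by simp only [mem_Ico]; omega), hqm1 _ (by simp only [mem_Ico]; omega)]
    ring
  have hhigh : ∀ s ∈ Ico r K, w (K * q + s) * w (K * q + s - (K * m + r)) =
      p s * p (s - r) * (w q * w (q - m)) := by
    intro s hs
    have hs' := mem_Ico.mp hs
    rw [show K * q + s - (K * m + r) = K * (q - m) + (s - r) by ring,
      hq s (by simp only [mem_Ico]; omega), hqm _ (by simp only [mem_Ico]; omega)]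
    ring
  rw [← Ico_union_Ico_eq_Ico hr0 hrK, sum_union (Ico_disjoint_Ico_consecutive 0 r K),
    sum_congr rfl hlow, sum_congr rfl hhigh, ← sum_mul, ← sum_mul,
    sum_Ico_mul_shift_eq_aperiodicCorr, ← aperiodicCorr, add_comm]

lemma sum_Ico_neg_mul_eq_sum_blocks {M : Type*} [AddCommMonoid M] (f : ℤ → M) {K : ℤ}
    (hK : 0 < K) (P : ℤ) :
    ∑ n ∈ Ico (-(K * P)) (K * P), f n = ∑ q ∈ Ico (-P) P, ∑ s ∈ Ico 0 K, f (K * q + s) := by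
  rw [← sum_product']
  refine (sum_nbij' (fun x => K * x.1 + x.2) (fun n => (n / K, n % K)) ?_ ?_ ?_ ?_ ?_).symm
  · rintro ⟨q, s⟩ h
    simp only [mem_product, mem_Ico] at h ⊢
    constructor <;> nlinarith
  · intro n h
    simp only [mem_product, mem_Ico] at h ⊢
    exact ⟨⟨(Int.le_ediv_iff_mul_le hK).2 (by linarith), (Int.ediv_lt_iff_lt_mul hK).2 (by linarith)⟩,
      Int.emod_nonneg _ hK.ne', Int.emod_lt_of_pos _ hK⟩
  · rintro ⟨q, s⟩ h
    simp only [mem_product, mem_Ico] at h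
    obtain ⟨hdiv, hmod⟩ := (Int.ediv_emod_unique (a := K * q + s) hK).2 ⟨add_comm _ _, h.2⟩
    rw [hdiv, hmod]
  · intro n _
    exact Int.mul_ediv_add_emod n K
  · intros; rfl

lemma blockPattern_of_nonneg {v : ℕ → ℤ} {K : ℕ} {p : ℤ → ℤ}
    (hv : ∀ m s : ℕ, s < K → v (K * m + s) = p s * v m) {w : ℤ → ℤ}
    (hw : ∀ i : ℤ, 0 ≤ i → w i = v i.toNat) {j : ℤ} (hj : 0 ≤ j) : BlockPattern w K p j := by
  intro s hs
  obtain ⟨s0, hsK⟩ := mem_Ico.mp hs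
  lift j to ℕ using hj
  lift s to ℕ using s0
  rw [hw _ (by positivity), hw _ (by positivity), show (K : ℤ) * j + s = ((K * j + s : ℕ) : ℤ) by
    push_cast; ring, Int.toNat_natCast, Int.toNat_natCast, hv j s (by omega)]

lemma blockPattern_of_neg {v : ℕ → ℤ} {K : ℕ} {p : ℤ → ℤ}
    (hv : ∀ m s : ℕ, s < K → v (K * m + s) = p s * v m) {w : ℤ → ℤ}
    (hw : ∀ i : ℤ, i < 0 → w i = v (-i - 1).toNat) {j : ℤ} (hj : j < 0) :
    BlockPattern w K (fun s => p (K - 1 - s)) j := by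
  intro s hs
  obtain ⟨s0, hsK⟩ := mem_Ico.mp hs
  obtain ⟨a, rfl⟩ : ∃ a : ℕ, j = -(a : ℤ) - 1 := ⟨(-j - 1).toNat, by omega⟩
  obtain ⟨c, hc⟩ : ∃ c : ℕ, (c : ℤ) = K - 1 - s := ⟨(K - 1 - s).toNat, by omega⟩
  have hmirror : -((K : ℤ) * (-(a : ℤ) - 1) + s) - 1 = ((K * a + c : ℕ) : ℤ) := by
    push_cast; rw [hc]; ring
  have hblock : K * (-(a : ℤ) - 1) + s < 0 := by nlinarith
  show w _ = p (K - 1 - s) * w _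
  rw [hw _ hblock, hw _ (by omega), hmirror, Int.toNat_natCast, hv a c (by omega), hc,
    show -(-(a : ℤ) - 1) - 1 = a by ring, Int.toNat_natCast]

lemma gtm_eq_gtmBlock_mul {k ℓ : ℕ} {v : ℕ → ℤ}
    (hfix1 : ∀ m r, r < k → v ((k + ℓ) * m + r) = v m)
    (hfix2 : ∀ m r, k ≤ r → r < k + ℓ → v ((k + ℓ) * m + r) = -(v m))
    (m s : ℕ) (hs : s < k + ℓ) : v ((k + ℓ) * m + s) = gtmBlock k s * v m := by
  unfold gtmBlock
  split_ifs with hsk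
  · rw [hfix1 m s (by exact_mod_cast hsk), one_mul]
  · rw [hfix2 m s (by omega) hs, neg_one_mul]

/-- `C` collects the blocks `|q| ≤ |m|`, which may meet both sides of the mirror. -/
lemma exists_sum_mul_shift_eq {w p : ℤ → ℤ} {K r : ℤ} (hr0 : 0 ≤ r) (hrK : r < K)
    (hpos : ∀ j, 0 ≤ j → BlockPattern w K p j)
    (hneg : ∀ j, j < 0 → BlockPattern w K (fun s => p (K - 1 - s)) j) (m : ℤ) :
    ∃ C, ∀ P ≥ |m| + 1, ∑ n ∈ Ico (-(K * P)) (K * P), w n * w (n - (K * m + r)) =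
      aperiodicCorr p K r * ∑ q ∈ Ico (-P) P, w q * w (q - m) +
        aperiodicCorr p K (K - r) * ∑ q ∈ Ico (-P) P, w q * w (q - (m + 1)) + C := by
  set R := |m| + 1
  let defect q := ∑ s ∈ Ico 0 K, w (K * q + s) * w (K * q + s - (K * m + r)) -
    aperiodicCorr p K r * (w q * w (q - m)) -
    aperiodicCorr p K (K - r) * (w q * w (q - (m + 1)))
  have hdefect : ∀ q ∉ Ico (-R) R, defect q = 0 := by
    intro q hq
    simp only [mem_Ico, not_and_or, not_le, not_lt] at hq
    have := le_abs_self m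
    have := neg_abs_le m
    simp only [defect]
    rcases hq with hq | hq
    · rw [← aperiodicCorr_reverse p K r, ← aperiodicCorr_reverse p K (K - r),
        sum_block_mul_shift_eq hr0 hrK.le (hneg q (by omega)) (hneg _ (by omega))
          (hneg _ (by omega))]
      ring
    · rw [sum_block_mul_shift_eq hr0 hrK.le (hpos q (by omega)) (hpos _ (by omega))
        (hpos _ (by omega))]
      ring
  refine ⟨∑ q ∈ Ico (-R) R, defect q, fun P hP => ?_⟩
  rw [sum_Ico_neg_mul_eq_sum_blocks _ (by omega),
    sum_subset (Ico_subset_Ico (neg_le_neg hP) hP) (fun q _ hq => hdefect q hq)]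
  simp only [defect, sum_sub_distrib, ← mul_sum]
  ring

lemma tendsto_inv_two_mul_natCast_atTop : Tendsto (fun N : ℕ => (2 * (N : ℝ))⁻¹) atTop (𝓝 0) :=
  tendsto_inv_atTop_zero.comp (tendsto_natCast_atTop_atTop.const_mul_atTop two_pos)

lemma tendsto_mean_Ico_of_tendsto_mean_Icc {u : ℤ → ℝ} {C L : ℝ} (hu : ∀ n, |u n| ≤ C)
    (h : Tendsto (fun N : ℕ => 1 / (2 * (N : ℝ) + 1) * ∑ n ∈ Icc (-(N : ℤ)) N, u n) atTop (𝓝 L)) :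
    Tendsto (fun N : ℕ => (2 * (N : ℝ))⁻¹ * ∑ n ∈ Ico (-(N : ℤ)) N, u n) atTop (𝓝 L) := by
  have hinv := tendsto_inv_two_mul_natCast_atTop
  have hlim := ((tendsto_const_nhds (x := (1 : ℝ)).add hinv).mul h).sub
    (hinv.zero_mul_isBoundedUnder_le (isBoundedUnder_of ⟨C, fun N => hu N⟩))
  rw [add_zero, one_mul, sub_zero] at hlim
  refine hlim.congr' (eventually_atTop.2 ⟨1, fun N hN => ?_⟩)
  have hN : (0 : ℝ) < N := by exact_mod_cast hN
  rw [← Ico_insert_right (by omega), sum_insert right_notMem_Ico]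
  field_simp
  ring

lemma eq_of_tendsto_mean_of_eventually_eq {a b c : ℕ → ℝ} {x y z A B C K : ℝ}
    (ha : Tendsto (fun P : ℕ => (2 * (P : ℝ))⁻¹ * a P) atTop (𝓝 x))
    (hb : Tendsto (fun P : ℕ => (2 * (P : ℝ))⁻¹ * b P) atTop (𝓝 y))
    (hc : Tendsto (fun P : ℕ => (2 * (K * P))⁻¹ * c P) atTop (𝓝 z))
    (habc : ∀ᶠ P : ℕ in atTop, c P = A * a P + B * b P + C) :
    z = 1 / K * (A * x + B * y) := by
  have hinv := tendsto_inv_two_mul_natCast_atTop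
  have hlim := (((ha.const_mul A).add (hb.const_mul B)).const_mul K⁻¹).add
    (hinv.const_mul (K⁻¹ * C))
  rw [mul_zero, add_zero] at hlim
  refine tendsto_nhds_unique hc (hlim.congr' (habc.mono fun P hP => ?_)) |>.trans (by ring)
  simp only [hP, mul_inv]
  ring

theorem gtm_autocorrelation_recursion_general (k ℓ : ℕ)
    (v : ℕ → ℤ) (hpm : ∀ n, v n = 1 ∨ v n = -1)
    (hfix1 : ∀ m r, r < k → v ((k + ℓ) * m + r) = v m)
    (hfix2 : ∀ m r, k ≤ r → r < k + ℓ → v ((k + ℓ) * m + r) = -(v m))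
    (w : ℤ → ℤ)
    (hw1 : ∀ i : ℤ, 0 ≤ i → w i = v i.toNat)
    (hw2 : ∀ i : ℤ, i < 0 → w i = v (-i - 1).toNat)
    (η : ℤ → ℝ)
    (hη : ∀ m : ℤ, Tendsto
      (fun N : ℕ => (1 / (2 * (N : ℝ) + 1)) *
        ∑ n ∈ Finset.Icc (-(N : ℤ)) (N : ℤ), (w n : ℝ) * (w (n - m) : ℝ))
      atTop (nhds (η m))) :
    ∀ (m r : ℤ), 0 ≤ r → r < (k : ℤ) + ℓ →
      η (((k : ℤ) + ℓ) * m + r) = (1 / ((k : ℝ) + ℓ)) *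
        ((gtmAlpha k ℓ r : ℝ) * η m + (gtmAlpha k ℓ ((k : ℤ) + ℓ - r) : ℝ) * η (m + 1)) := by
  intro m r hr0 hrK
  have hv := gtm_eq_gtmBlock_mul hfix1 hfix2
  have hw : ∀ i j, |(w i : ℝ) * w j| ≤ 1 := by
    have hw_pm : ∀ i, w i = 1 ∨ w i = -1 := fun i => by
      rcases le_or_gt 0 i with hi | hi
      · exact hw1 i hi ▸ hpm _
      · exact hw2 i hi ▸ hpm _
    intro i j
    rcases hw_pm i with hi | hi <;> rcases hw_pm j with hj | hj <;> simp [hi, hj]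
  have hmean (j : ℤ) := tendsto_mean_Ico_of_tendsto_mean_Icc (fun n => hw n (n - j)) (hη j)
  obtain ⟨C, hC⟩ := exists_sum_mul_shift_eq hr0 hrK
    (fun j hj => by simpa using blockPattern_of_nonneg hv hw1 hj)
    (fun j hj => by simpa using blockPattern_of_neg hv hw2 hj) m
  rw [aperiodicCorr_gtmBlock k ℓ hr0 hrK.le, aperiodicCorr_gtmBlock k ℓ (by omega) (by omega)] at hC
  refine eq_of_tendsto_mean_of_eventually_eq (C := (C : ℝ)) (hmean m) (hmean (m + 1))
    (c := fun P : ℕ => ∑ n ∈ Ico (-(((k : ℤ) + ℓ) * P)) (((k : ℤ) + ℓ) * P),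
      (w n : ℝ) * w (n - (((k : ℤ) + ℓ) * m + r))) ?_
    (eventually_atTop.2 ⟨(|m| + 1).toNat, fun P hP => by exact_mod_cast hC P (by omega)⟩)
  have hKP : Tendsto (fun P : ℕ => (k + ℓ) * P) atTop atTop :=
    tendsto_id.const_mul_atTop' (by omega)
  refine ((hmean _).comp hKP).congr fun P => ?_
  push_cast [Function.comp_apply]
  rfl

/-- the autocorrelation coefficients of the gTM sequence satisfy
`η ((k+ℓ)m + r) = (α_{k,ℓ,r} η(m) + α_{k,ℓ,k+ℓ-r} η(m+1)) / (k+ℓ)`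
for all `m ∈ ℤ` and `0 ≤ r < k+ℓ`. -/
theorem gtm_autocorrelation_recursion (k ℓ : ℕ) (hk : 1 ≤ k) (hℓ : 1 ≤ ℓ)
    (v : ℕ → ℤ) (hpm : ∀ n, v n = 1 ∨ v n = -1) (hv0 : v 0 = 1)
    (hfix1 : ∀ m r, r < k → v ((k + ℓ) * m + r) = v m)
    (hfix2 : ∀ m r, k ≤ r → r < k + ℓ → v ((k + ℓ) * m + r) = -(v m))
    (w : ℤ → ℤ)
    (hw1 : ∀ i : ℤ, 0 ≤ i → w i = v i.toNat)
    (hw2 : ∀ i : ℤ, i < 0 → w i = v (-i - 1).toNat)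
    (η : ℤ → ℝ)
    (hη : ∀ m : ℤ, Tendsto
      (fun N : ℕ => (1 / (2 * (N : ℝ) + 1)) *
        ∑ n ∈ Finset.Icc (-(N : ℤ)) (N : ℤ), (w n : ℝ) * (w (n - m) : ℝ))
      atTop (nhds (η m)))
    (hsym : ∀ m : ℤ, η (-m) = η m) :
    ∀ (m r : ℤ), 0 ≤ r → r < (k : ℤ) + ℓ →
      η (((k : ℤ) + ℓ) * m + r) = (1 / ((k : ℝ) + ℓ)) *
        ((gtmAlpha k ℓ r : ℝ) * η m + (gtmAlpha k ℓ ((k : ℤ) + ℓ - r) : ℝ) * η (m + 1)) :=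
  gtm_autocorrelation_recursion_general k ℓ v hpm hfix1 hfix2 w hw1 hw2 η hη
end

section
/- Let k, ℓ ∈ ℕ with k+ℓ > 2, and let η : ℤ → ℝ satisfy η(0) = 1, η(−n) = η(n), |η(n)| ≤ 1, and the gTM recursion η((k+ℓ)m+r) = (1/(k+ℓ))(α_{k,ℓ,r} η(m) + α_{k,ℓ,k+ℓ−r} η(m+1)). Define Σ(N) = ∑_{n=−N}^{N} η(n)². Then there exists q < k+ℓ (positive) such that Σ((k+ℓ)N) ≤ q·Σ(N) for all N ∈ ℕ. -/
/-!
Write `s = k + ℓ`, `a_r = α_{k,ℓ,r}`, `b_r = α_{k,ℓ,s-r}` and `γ_r = |a_r| + |b_r|`. Splitting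
`[-sN, sN)` into the blocks `sm + [0, s)`, the recursion and the Cauchy–Schwarz bound
`(ax + by)² ≤ (|a| + |b|)(|a|x² + |b|y²)` give `Σ(sN) ≤ (∑_r γ_r² / s²) Σ(N)`; the remaining
endpoint `η(sN)² = η(N)²` is absorbed because the total weight of `η(m)²` is at least `γ_0 |a_0| = s²`.
Finally `γ_r ≤ s` for all `r`, while `γ_1 = s - 2`, so `q = ∑_{r<s} γ_r² / s² < s`.
-/

open Finset

theorem sq_mul_add_mul_le (a b x y : ℝ) :
    (a * x + b * y) ^ 2 ≤ (|a| + |b|) * (|a| * x ^ 2 + |b| * y ^ 2) := by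
  nlinarith [le_abs_self (a * b), neg_abs_le (a * b), abs_mul a b, sq_nonneg (x - y),
    sq_nonneg (x + y), sq_abs a, sq_abs b, mul_nonneg (abs_nonneg a) (abs_nonneg b)]

theorem sum_Ico_add_natCast_eq_sum_range {M : Type*} [AddCommMonoid M] (f : ℤ → M) (c : ℤ)
    (s : ℕ) :
    ∑ n ∈ Ico c (c + s), f n = ∑ r ∈ range s, f (c + r) := by
  induction s with
  | zero => simp
  | succ s ih =>
    rw [sum_range_succ, ← ih, Nat.cast_succ, ← add_assoc,
      ← insert_Ico_right_eq_Ico_add_one (by omega), sum_insert right_notMem_Ico, add_comm]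

theorem sum_Ico_mul_eq_sum_sum_range {M : Type*} [AddCommMonoid M] (f : ℤ → M) (s : ℕ)
    {a b : ℤ} (hab : a ≤ b) :
    ∑ n ∈ Ico (s * a) (s * b), f n = ∑ m ∈ Ico a b, ∑ r ∈ range s, f (s * m + r) := by
  induction b, hab using Int.leInduction with
  | base => simp
  | succ b hab ih =>
    have hs : (0 : ℤ) ≤ s := by positivity
    rw [← insert_Ico_right_eq_Ico_add_one hab, sum_insert right_notMem_Ico, ← ih, mul_add_one,
      ← Ico_union_Ico_eq_Ico (mul_le_mul_of_nonneg_left hab hs) (by omega),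
      sum_union (Ico_disjoint_Ico_consecutive _ _ _), sum_Ico_add_natCast_eq_sum_range, add_comm]

theorem sum_Ico_add_one_le_sum_Icc {f : ℤ → ℝ} (hf : ∀ n, 0 ≤ f n) (a b : ℤ) :
    ∑ m ∈ Ico a b, f (m + 1) ≤ ∑ n ∈ Icc a b, f n := by
  rw [sum_Ico_add']
  exact sum_le_sum_of_subset_of_nonneg
    (fun n hn => by simp only [mem_Ico, mem_Icc] at hn ⊢; omega) fun n _ _ => hf n

section SquareSumGrowth

variable {s : ℕ} {a b : ℕ → ℝ} {η : ℤ → ℝ}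

theorem sum_range_sq_le_of_rec
    (hrec : ∀ (m : ℤ) (r : ℕ), r < s → η (s * m + r) = 1 / s * (a r * η m + b r * η (m + 1)))
    (m : ℤ) :
    ∑ r ∈ range s, η (s * m + r) ^ 2 ≤
      ((∑ r ∈ range s, (|a r| + |b r|) * |a r|) * η m ^ 2 +
        (∑ r ∈ range s, (|a r| + |b r|) * |b r|) * η (m + 1) ^ 2) / s ^ 2 := by
  rw [sum_mul, sum_mul, ← sum_add_distrib, sum_div]
  refine sum_le_sum fun r hr => ?_
  rw [hrec m r (mem_range.1 hr), mul_pow, one_div, inv_pow, ← div_eq_inv_mul]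
  gcongr
  exact (sq_mul_add_mul_le _ _ _ _).trans_eq (by ring)

theorem sum_sq_Icc_mul_le_of_rec (hs : 0 < s) (ha : a 0 = s) (hb : b 0 = 0)
    (hrec : ∀ (m : ℤ) (r : ℕ), r < s → η (s * m + r) = 1 / s * (a r * η m + b r * η (m + 1)))
    (N : ℕ) :
    ∑ n ∈ Icc (-((s * N : ℕ) : ℤ)) ((s * N : ℕ) : ℤ), η n ^ 2 ≤
      (∑ r ∈ range s, (|a r| + |b r|) ^ 2) / s ^ 2 * ∑ n ∈ Icc (-(N : ℤ)) N, η n ^ 2 := by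
  set A := ∑ r ∈ range s, (|a r| + |b r|) * |a r|
  set B := ∑ r ∈ range s, (|a r| + |b r|) * |b r|
  set P := ∑ m ∈ Ico (-(N : ℤ)) N, η m ^ 2
  set R := ∑ m ∈ Ico (-(N : ℤ)) N, η (m + 1) ^ 2
  have hS : (0 : ℝ) < s ^ 2 := by positivity
  have hAB : ∑ r ∈ range s, (|a r| + |b r|) ^ 2 = A + B := by
    rw [← sum_add_distrib]; exact sum_congr rfl fun r _ => by ring
  have hA : (s : ℝ) ^ 2 ≤ A := by
    calc (s : ℝ) ^ 2 = (|a 0| + |b 0|) * |a 0| := by simp [ha, hb, sq]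
      _ ≤ A := single_le_sum (f := fun r => (|a r| + |b r|) * |a r|)
          (fun r _ => by positivity) (mem_range.2 hs)
  have hB : 0 ≤ B := sum_nonneg fun r _ => by positivity
  have hP : η N ^ 2 + P = ∑ n ∈ Icc (-(N : ℤ)) N, η n ^ 2 :=
    add_sum_Ico_eq_sum_Icc (f := fun n => η n ^ 2) (by omega)
  have hR : R ≤ η N ^ 2 + P := hP ▸ sum_Ico_add_one_le_sum_Icc (fun n => sq_nonneg (η n)) _ _
  have htop : η (s * N) = η N := by
    simpa [ha, hb, hs.ne'] using hrec N 0 hs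
  have hblocks : ∑ m ∈ Ico (-(N : ℤ)) N, ∑ r ∈ range s, η (s * m + r) ^ 2 ≤
      (A * P + B * R) / s ^ 2 := by
    rw [mul_sum, mul_sum, ← sum_add_distrib, sum_div]
    exact sum_le_sum fun m _ => sum_range_sq_le_of_rec hrec m
  have hsplit : ∑ n ∈ Icc (-((s * N : ℕ) : ℤ)) ((s * N : ℕ) : ℤ), η n ^ 2 =
      η N ^ 2 + ∑ m ∈ Ico (-(N : ℤ)) N, ∑ r ∈ range s, η (s * m + r) ^ 2 := by
    rw [← add_sum_Ico_eq_sum_Icc (by omega), Nat.cast_mul, ← mul_neg,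
      sum_Ico_mul_eq_sum_sum_range _ _ (by omega), htop]
  calc _ = η N ^ 2 + ∑ m ∈ Ico (-(N : ℤ)) N, ∑ r ∈ range s, η (s * m + r) ^ 2 := hsplit
    _ ≤ η N ^ 2 + (A * P + B * R) / s ^ 2 := by gcongr
    _ ≤ (A + B) / s ^ 2 * (η N ^ 2 + P) := by
      rw [div_mul_eq_mul_div, le_div_iff₀ hS, add_mul, div_mul_cancel₀ _ hS.ne']
      nlinarith [mul_le_mul_of_nonneg_left hR hB, mul_le_mul_of_nonneg_right hA (sq_nonneg (η N))]
    _ = _ := by rw [hAB, hP]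

end SquareSumGrowth

section GtmWeight

variable (k ℓ : ℕ)

theorem gtmAlpha_zero : gtmAlpha k ℓ 0 = k + ℓ := by
  unfold gtmAlpha; omega

theorem gtmAlpha_self : gtmAlpha k ℓ (k + ℓ) = 0 := by
  unfold gtmAlpha; omega

theorem abs_gtmAlpha_le {r : ℤ} (h0 : 0 ≤ r) (h1 : r ≤ k + ℓ) :
    |gtmAlpha k ℓ r| ≤ k + ℓ - r := by
  unfold gtmAlpha; rw [abs_le]; omega

def gtmWeight (r : ℕ) : ℝ :=
  |(gtmAlpha k ℓ r : ℝ)| + |(gtmAlpha k ℓ ((k : ℤ) + ℓ - r) : ℝ)|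

theorem gtmWeight_zero : gtmWeight k ℓ 0 = k + ℓ := by
  simp [gtmWeight, gtmAlpha_zero, gtmAlpha_self]; positivity

theorem gtmWeight_le {r : ℕ} (hr : r ≤ k + ℓ) : gtmWeight k ℓ r ≤ k + ℓ := by
  have h₁ := abs_gtmAlpha_le k ℓ (r := r) (by omega) (by omega)
  have h₂ := abs_gtmAlpha_le k ℓ (r := k + ℓ - r) (by omega) (by omega)
  rw [gtmWeight, ← Int.cast_abs, ← Int.cast_abs]
  exact_mod_cast (by omega : |gtmAlpha k ℓ r| + |gtmAlpha k ℓ (k + ℓ - r)| ≤ k + ℓ)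

variable {k ℓ}

theorem gtmWeight_one (hk : 1 ≤ k) (hℓ : 1 ≤ ℓ) (h2 : 2 < k + ℓ) :
    gtmWeight k ℓ 1 = k + ℓ - 2 := by
  have hα₁ : gtmAlpha k ℓ 1 = k + ℓ - 3 := by unfold gtmAlpha; omega
  have hα₂ : gtmAlpha k ℓ (k + ℓ - 1) = -1 := by unfold gtmAlpha; omega
  have h3 : (3 : ℝ) ≤ k + ℓ := by exact_mod_cast h2
  simp only [gtmWeight, Nat.cast_one, hα₁, hα₂]
  push_cast
  rw [abs_of_nonneg (by linarith), abs_neg, abs_one]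
  ring

theorem sum_range_gtmWeight_sq_lt (hk : 1 ≤ k) (hℓ : 1 ≤ ℓ) (h2 : 2 < k + ℓ) :
    ∑ r ∈ range (k + ℓ), gtmWeight k ℓ r ^ 2 < (k + ℓ) * ((k : ℝ) + ℓ) ^ 2 := by
  have h3 : (3 : ℝ) ≤ k + ℓ := by exact_mod_cast h2
  calc ∑ r ∈ range (k + ℓ), gtmWeight k ℓ r ^ 2
        < ∑ r ∈ range (k + ℓ), ((k : ℝ) + ℓ) ^ 2 := by
        refine sum_lt_sum (fun r hr => ?_) ⟨1, mem_range.2 (by omega), ?_⟩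
        · exact pow_le_pow_left₀ (by unfold gtmWeight; positivity)
            (gtmWeight_le k ℓ (mem_range.1 hr).le) 2
        · rw [gtmWeight_one hk hℓ h2]
          gcongr <;> linarith
    _ = (k + ℓ) * ((k : ℝ) + ℓ) ^ 2 := by simp

end GtmWeight

theorem gtm_sigma_growth_general (k ℓ : ℕ) (hk : 1 ≤ k) (hℓ : 1 ≤ ℓ) (h2 : 2 < k + ℓ)
    (η : ℤ → ℝ)
    (hrec : ∀ (m r : ℤ), 0 ≤ r → r < (k : ℤ) + ℓ →
      η (((k : ℤ) + ℓ) * m + r) = (1 / ((k : ℝ) + ℓ)) *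
        ((gtmAlpha k ℓ r : ℝ) * η m + (gtmAlpha k ℓ ((k : ℤ) + ℓ - r) : ℝ) * η (m + 1))) :
    ∃ q : ℝ, 0 < q ∧ q < (k : ℝ) + ℓ ∧ ∀ N : ℕ, 1 ≤ N →
      (∑ n ∈ Finset.Icc (-(((k + ℓ) * N : ℕ) : ℤ)) (((k + ℓ) * N : ℕ) : ℤ), η n ^ 2) ≤
        q * ∑ n ∈ Finset.Icc (-(N : ℤ)) (N : ℤ), η n ^ 2 := by
  have hs : 0 < k + ℓ := by omega
  refine ⟨(∑ r ∈ range (k + ℓ), gtmWeight k ℓ r ^ 2) / ((k + ℓ : ℕ) : ℝ) ^ 2, ?_, ?_,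
    fun N _ => ?_⟩
  · refine div_pos (sum_pos' (fun r _ => sq_nonneg _) ⟨0, mem_range.2 hs, ?_⟩) (by positivity)
    rw [gtmWeight_zero]
    positivity
  · push_cast
    rw [div_lt_iff₀ (by positivity)]
    exact sum_range_gtmWeight_sq_lt hk hℓ h2
  · have hα₀ : (gtmAlpha k ℓ 0 : ℝ) = ((k + ℓ : ℕ) : ℝ) := by simp [gtmAlpha_zero]
    have hαs : (gtmAlpha k ℓ ((k : ℤ) + ℓ - 0) : ℝ) = 0 := by simp [gtmAlpha_self]
    exact sum_sq_Icc_mul_le_of_rec hs hα₀ hαs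
      (fun m r hr => by push_cast; exact hrec m r (by positivity) (by omega)) N

/-- growth lemma: for `k+ℓ > 2` and `η` satisfying the gTM
recursion (with `η 0 = 1`, symmetric, bounded by `1`), there is a positive
`q < k+ℓ` with `Σ((k+ℓ)N) ≤ q Σ(N)` for all `N ∈ ℕ`, where
`Σ(N) = ∑_{n=-N}^{N} η(n)²`. -/
theorem gtm_sigma_growth (k ℓ : ℕ) (hk : 1 ≤ k) (hℓ : 1 ≤ ℓ) (h2 : 2 < k + ℓ)
    (η : ℤ → ℝ) (hη0 : η 0 = 1) (hsym : ∀ n : ℤ, η (-n) = η n)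
    (hbd : ∀ n : ℤ, |η n| ≤ 1)
    (hrec : ∀ (m r : ℤ), 0 ≤ r → r < (k : ℤ) + ℓ →
      η (((k : ℤ) + ℓ) * m + r) = (1 / ((k : ℝ) + ℓ)) *
        ((gtmAlpha k ℓ r : ℝ) * η m + (gtmAlpha k ℓ ((k : ℤ) + ℓ - r) : ℝ) * η (m + 1))) :
    ∃ q : ℝ, 0 < q ∧ q < (k : ℝ) + ℓ ∧ ∀ N : ℕ, 1 ≤ N →
      (∑ n ∈ Finset.Icc (-(((k + ℓ) * N : ℕ) : ℤ)) (((k + ℓ) * N : ℕ) : ℤ), η n ^ 2) ≤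
        q * ∑ n ∈ Finset.Icc (-(N : ℤ)) (N : ℤ), η n ^ 2 :=
  gtm_sigma_growth_general k ℓ hk hℓ h2 η hrec
end

section
/- Under the hypotheses of the growth lemma (Σ((k+ℓ)N) ≤ q Σ(N) for some 0 < q < k+ℓ, Σ nondecreasing, Σ(N) ≤ 2N+1), one has (1/N)·Σ(N) → 0 as N → ∞. -/
/-!
Iterating `Σ(bN) ≤ q Σ(N)` gives `Σ(b^j) ≤ q^j Σ(1)`. For `b^j ≤ N < b^(j+1)` monotonicity then
yields `Σ(N)/N ≤ Σ(b^(j+1))/b^j ≤ q Σ(1) (q/b)^j`, and `j = log_b N → ∞` while `q/b < 1`.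
-/

open Filter

theorem Nat.tendsto_log_atTop {b : ℕ} (hb : 1 < b) : Tendsto (Nat.log b) atTop atTop :=
  tendsto_atTop_atTop_of_monotone (fun _ _ h => Nat.log_mono_right h)
    fun j => ⟨b ^ j, (Nat.log_pow hb j).ge⟩

section GrowthBound

variable {b : ℕ} {q : ℝ} {f : ℕ → ℝ}

theorem apply_pow_le_pow_mul_apply_one (hb : 0 < b) (hq : 0 ≤ q)
    (hgrowth : ∀ N : ℕ, 1 ≤ N → f (b * N) ≤ q * f N) (j : ℕ) :
    f (b ^ j) ≤ q ^ j * f 1 := by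
  induction j with
  | zero => simp
  | succ j ih =>
    calc f (b ^ (j + 1)) = f (b * b ^ j) := by rw [pow_succ']
      _ ≤ q * f (b ^ j) := hgrowth _ (Nat.one_le_pow _ _ hb)
      _ ≤ q * (q ^ j * f 1) := mul_le_mul_of_nonneg_left ih hq
      _ = q ^ (j + 1) * f 1 := by ring

theorem apply_div_le_mul_div_pow_log (hb : 1 < b) (hq : 0 ≤ q) (hf1 : 0 ≤ f 1) (hmono : Monotone f)
    (hgrowth : ∀ N : ℕ, 1 ≤ N → f (b * N) ≤ q * f N) {N : ℕ} (hN : N ≠ 0) :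
    f N / N ≤ q * f 1 * (q / b) ^ Nat.log b N := by
  set j := Nat.log b N
  have hlow : (b : ℝ) ^ j ≤ N := by exact_mod_cast Nat.pow_log_le_self b hN
  have hhigh : f N ≤ q ^ (j + 1) * f 1 :=
    (hmono (Nat.lt_pow_succ_log_self hb N).le).trans
      (apply_pow_le_pow_mul_apply_one (by omega) hq hgrowth _)
  have hbj : (0 : ℝ) < (b : ℝ) ^ j := by positivity
  calc f N / N ≤ q ^ (j + 1) * f 1 / (b : ℝ) ^ j :=
        div_le_div₀ (by positivity) hhigh hbj hlow
    _ = q * f 1 * (q / b) ^ j := by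
        rw [div_pow]
        field_simp
        ring

end GrowthBound

theorem sigma_over_N_tendsto_zero_general (b : ℕ) (hb : 2 ≤ b) (q : ℝ)
    (hq0 : 0 < q) (hqb : q < (b : ℝ)) (Sig : ℕ → ℝ)
    (hnonneg : ∀ N, 0 ≤ Sig N) (hmono : Monotone Sig)
    (hgrowth : ∀ N : ℕ, 1 ≤ N → Sig (b * N) ≤ q * Sig N) :
    Tendsto (fun N : ℕ => Sig N / N) atTop (nhds 0) := by
  have hb1 : 1 < b := hb
  have hratio : Tendsto (fun n : ℕ => (q / b) ^ n) atTop (nhds 0) :=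
    tendsto_pow_atTop_nhds_zero_of_lt_one (by positivity) ((div_lt_one (by positivity)).2 hqb)
  have hdom : Tendsto (fun N => q * Sig 1 * (q / b) ^ Nat.log b N) atTop (nhds 0) := by
    simpa using (hratio.comp (Nat.tendsto_log_atTop hb1)).const_mul (q * Sig 1)
  refine squeeze_zero' (Eventually.of_forall fun N => div_nonneg (hnonneg N) N.cast_nonneg)
    ?_ hdom
  filter_upwards [eventually_ne_atTop 0] with N hN
  exact apply_div_le_mul_div_pow_log hb1 hq0.le (hnonneg 1) hmono hgrowth hN

/-- if `Σ : ℕ → ℝ` is nonnegative, nondecreasing, satisfies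
`Σ(N) ≤ 2N+1` and `Σ(bN) ≤ q Σ(N)` for all `N ≥ 1` with `0 < q < b` and
integer `b ≥ 2`, then `Σ(N)/N → 0`. -/
theorem sigma_over_N_tendsto_zero (b : ℕ) (hb : 2 ≤ b) (q : ℝ)
    (hq0 : 0 < q) (hqb : q < (b : ℝ)) (Sig : ℕ → ℝ)
    (hnonneg : ∀ N, 0 ≤ Sig N) (hmono : Monotone Sig)
    (hbound : ∀ N, Sig N ≤ 2 * N + 1)
    (hgrowth : ∀ N : ℕ, 1 ≤ N → Sig (b * N) ≤ q * Sig N) :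
    Tendsto (fun N : ℕ => Sig N / N) atTop (nhds 0) :=
  sigma_over_N_tendsto_zero_general b hb q hq0 hqb Sig hnonneg hmono hgrowth
end

section
/- If η : ℤ → ℝ satisfies η(3m) = η(m) for all m, η(1) = 0, η(2) = −(1/3)η(0), and η(n) → 0 as n → ∞, then η(0) = 0. -/
open Filter Topology

theorem apply_pow_mul_eq_of_apply_mul_eq {α : Type*} (f : ℤ → α) {b : ℤ}
    (hf : ∀ m, f (b * m) = f m) (a : ℤ) (k : ℕ) : f (b ^ k * a) = f a := by
  induction k with
  | zero => simp
  | succ k ih => rw [pow_succ', mul_assoc, hf, ih]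

/-- Along the geometric progression `b ^ k * a` the function is constant, so it equals its limit. -/
theorem apply_eq_of_apply_mul_eq_of_tendsto {α : Type*} [TopologicalSpace α] [T2Space α]
    (f : ℤ → α) {b : ℕ} (hb : 1 < b) (hf : ∀ m, f (b * m) = f m) {c : α}
    (hlim : Tendsto (fun n : ℕ => f n) atTop (𝓝 c)) {a : ℕ} (ha : 0 < a) : f a = c := by
  have hprog : Tendsto (fun k : ℕ => b ^ k * a) atTop atTop :=
    (tendsto_pow_atTop_atTop_of_one_lt hb).atTop_mul_const' ha
  have hconst : (fun k : ℕ => f (b ^ k * a : ℕ)) = fun _ => f a := by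
    funext k
    push_cast
    exact apply_pow_mul_eq_of_apply_mul_eq f hf a k
  have := hlim.comp hprog
  rw [Function.comp_def, hconst] at this
  exact tendsto_nhds_unique tendsto_const_nhds this

theorem gtm_ac_part_vanishes_case_three_general (η : ℤ → ℝ)
    (hself : ∀ m : ℤ, η (3 * m) = η m)
    (htwo : η 2 = -(1 / 3) * η 0)
    (hdecay : Tendsto (fun n : ℕ => η (n : ℤ)) atTop (nhds 0)) :
    η 0 = 0 := by
  have h2 : η (2 : ℕ) = 0 :=
    apply_eq_of_apply_mul_eq_of_tendsto η (b := 3) (by norm_num) (by exact_mod_cast hself)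
      hdecay two_pos
  rw [Nat.cast_ofNat, htwo] at h2
  linarith

/-- case `k+ℓ = 3`: if `η : ℤ → ℝ` satisfies `η(3m) = η(m)`
for all `m`, `η(1) = 0`, `η(2) = -(1/3) η(0)`, and `η(n) → 0` as `n → ∞`,
then `η(0) = 0`. -/
theorem gtm_ac_part_vanishes_case_three (η : ℤ → ℝ)
    (hself : ∀ m : ℤ, η (3 * m) = η m)
    (hone : η 1 = 0) (htwo : η 2 = -(1 / 3) * η 0)
    (hdecay : Tendsto (fun n : ℕ => η (n : ℤ)) atTop (nhds 0)) :
    η 0 = 0 :=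
  gtm_ac_part_vanishes_case_three_general η hself htwo hdecay
end

section
/- As formal power series, exp(∑_{n≥1} ((k+ℓ)^n + (k−ℓ)^n − 1 + (−1)^n) zⁿ/n) = (1−z)/((1+z)(1−(k+ℓ)z)(1−(k−ℓ)z)); equivalently, the gTM dynamical zeta function ζ^TM_{k,ℓ}(z) = (1−z)/((1+z)(1−(k+ℓ)z)(1−(k−ℓ)z)) has fixed point counts a^TM(n) = (k+ℓ)^n + (k−ℓ)^n − (1 − (−1)^n). -/
/-! Since `∑ₙ xⁿ/n = -log (1 - x)` for `|x| < 1`, the exponent splits into four logarithmic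
series, for `x = (k+ℓ)z`, `(k-ℓ)z`, `z` and `-z`, whose exponentials are the four factors of
the rational function. -/

open Real

theorem exp_tsum_pow_add_pow_sub_one_sub_neg_one_pow {a b z : ℝ}
    (ha : |a * z| < 1) (hb : |b * z| < 1) (hz : |z| < 1) :
    exp (∑' n : ℕ, (a ^ (n + 1) + b ^ (n + 1) - (1 - (-1 : ℝ) ^ (n + 1))) * z ^ (n + 1) / (n + 1)) =
      (1 - z) / ((1 + z) * (1 - a * z) * (1 - b * z)) := by
  have hsum := (((hasSum_pow_div_log_of_abs_lt_one ha).add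
    (hasSum_pow_div_log_of_abs_lt_one hb)).sub (hasSum_pow_div_log_of_abs_lt_one hz)).add
    (hasSum_pow_div_log_of_abs_lt_one (abs_neg z ▸ hz))
  have hterm : ∀ n : ℕ,
      (a ^ (n + 1) + b ^ (n + 1) - (1 - (-1 : ℝ) ^ (n + 1))) * z ^ (n + 1) / (n + 1) =
        (a * z) ^ (n + 1) / (n + 1) + (b * z) ^ (n + 1) / (n + 1) - z ^ (n + 1) / (n + 1) +
          (-z) ^ (n + 1) / (n + 1) := by
    intro n
    rw [mul_pow, mul_pow, neg_pow]
    ring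
  have pa : 0 < 1 - a * z := by linarith [(abs_lt.mp ha).2]
  have pb : 0 < 1 - b * z := by linarith [(abs_lt.mp hb).2]
  have pz : 0 < 1 - z := by linarith [(abs_lt.mp hz).2]
  have pnz : 0 < 1 + z := by linarith [(abs_lt.mp hz).1]
  rw [tsum_congr hterm, hsum.tsum_eq]
  simp only [sub_neg_eq_add, exp_add, exp_neg, exp_log pa, exp_log pb, exp_log pz,
    exp_log pnz]
  field_simp [pa.ne', pb.ne', pz.ne', pnz.ne']

theorem gtm_zeta_function_general (k ℓ : ℕ) (hk : 1 ≤ k) :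
    ∀ z : ℝ, |z| * ((k : ℝ) + ℓ) < 1 →
      Real.exp (∑' n : ℕ,
        (((k : ℝ) + ℓ) ^ (n + 1) + ((k : ℝ) - ℓ) ^ (n + 1)
          - (1 - (-1 : ℝ) ^ (n + 1))) * z ^ (n + 1) / (n + 1)) =
      (1 - z) / ((1 + z) * (1 - ((k : ℝ) + ℓ) * z) * (1 - ((k : ℝ) - ℓ) * z)) := by
  intro z hz
  have hk₁ : (1 : ℝ) ≤ k := by exact_mod_cast hk
  have hℓ₀ : (0 : ℝ) ≤ ℓ := ℓ.cast_nonneg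
  have hdiff : |(k : ℝ) - ℓ| ≤ k + ℓ := abs_sub_le_iff.mpr ⟨by linarith, by linarith⟩
  have hsum : |((k : ℝ) + ℓ) * z| < 1 := by
    rwa [abs_mul, abs_of_pos (by linarith), mul_comm]
  refine exp_tsum_pow_add_pow_sub_one_sub_neg_one_pow hsum ?_ ?_
  · rw [abs_mul]
    nlinarith [abs_nonneg z]
  · nlinarith [abs_nonneg z]

/-- the generalised Thue-Morse zeta function identity:
`exp(∑_{n≥1} a^TM(n) zⁿ/n) = (1-z)/((1+z)(1-(k+ℓ)z)(1-(k-ℓ)z))`, with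
fixed point counts `a^TM(n) = (k+ℓ)ⁿ + (k-ℓ)ⁿ - (1 - (-1)ⁿ)`, valid for
`|z| (k+ℓ) < 1`. -/
theorem gtm_zeta_function (k ℓ : ℕ) (hk : 1 ≤ k) (hℓ : 1 ≤ ℓ) :
    ∀ z : ℝ, |z| * ((k : ℝ) + ℓ) < 1 →
      Real.exp (∑' n : ℕ,
        (((k : ℝ) + ℓ) ^ (n + 1) + ((k : ℝ) - ℓ) ^ (n + 1)
          - (1 - (-1 : ℝ) ^ (n + 1))) * z ^ (n + 1) / (n + 1)) =
      (1 - z) / ((1 + z) * (1 - ((k : ℝ) + ℓ) * z) * (1 - ((k : ℝ) - ℓ) * z)) :=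
  gtm_zeta_function_general k ℓ hk
end
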